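/- arXiv:2412.19054 — 8 statements merged into one kernel-verified Lean document; each statement's English description precedes it below -/
import Mathlib

section
/- Assume the couple (A,F) is monotone, i.e., ⟨Ax−Ay, Fx−Fy⟩ ≥ 0 for all x,y ∈ H. Then x* solves GVI(A,F,C) if and only if Fx* ∈ C and for all y ∈ H and f ∈ C: ⟨Ay−Ax*, Fy−f⟩ + ⟨Ay, f−Fx*⟩ ≥ 0. -/
open scoped RealInnerProductSpace

theorem stmt_1 {H : Type*} [NormedAddCommGroup H] [InnerProductSpace ℝ H]
    (C : Set H) (hC : C.Nonempty) (hCc : IsClosed C) (hCconv : Convex ℝ C)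
    (A F : H → H)
    (hmono : ∀ x y : H, ⟪A x - A y, F x - F y⟫ ≥ 0) (xs : H) :
    (F xs ∈ C ∧ ∀ y ∈ C, ⟪A xs, y - F xs⟫ ≥ 0) ↔
      (F xs ∈ C ∧ ∀ (y : H), ∀ f ∈ C,
        ⟪A y - A xs, F y - f⟫ + ⟪A y, f - F xs⟫ ≥ 0) := by
  constructor
  · rintro ⟨hF, hsol⟩
    refine ⟨hF, fun y f hf => ?_⟩
    have h1 := hmono y xs
    have h2 := hsol f hf
    simp only [inner_sub_left, inner_sub_right] at *
    linarith
  · rintro ⟨hF, hsol⟩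
    refine ⟨hF, fun y hy => ?_⟩
    have := hsol xs y hy
    simp only [sub_self, inner_zero_left, zero_add] at this
    exact this
end

section
/- Let C be a nonempty closed convex subset of a real Hilbert space H, and A, F : H → H Lipschitz continuous with constants L_A, L_F. If A is λ-strongly monotone and the couple (A,F) is γ-strongly monotone on H, then GVI(A,F,C) admits a unique solution. -/
open scoped RealInnerProductSpace NNReal

/-!
A Lipschitz, `μ`-strongly monotone operator `T` has a unique solution of `VI(T, C)`: it is the
fixed point of the contraction `w ↦ P_C (w - (μ / L²) • T w)`, and with `C = H` this also shows
that `T` is onto. Applied to `A`, and then to `F ∘ A⁻¹` (Lipschitz and `γ / L_A²`-strongly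
monotone), this makes `F` onto; strong monotonicity of `(A, F)` makes it injective. The
substitution `w = F x` then turns `GVI(A, F, C)` into `VI(A ∘ F⁻¹, C)`, whose operator is
Lipschitz and `γ / L_F²`-strongly monotone.
-/

section

variable {H : Type*} [NormedAddCommGroup H] [InnerProductSpace ℝ H] {C : Set H}

/-- The couple `(A, F)` is `γ`-strongly monotone. A single operator `T` is encoded as the couple
`(T, id)`, and likewise `SolvesGVI T id C` is the classical variational inequality `VI(T, C)`. -/
def StronglyMonotoneWith (γ : ℝ) (A F : H → H) : Prop :=
  ∀ x y, γ * ‖x - y‖ ^ 2 ≤ ⟪A x - A y, F x - F y⟫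

def SolvesGVI (A F : H → H) (C : Set H) (x : H) : Prop :=
  F x ∈ C ∧ ∀ y ∈ C, ⟪A x, y - F x⟫ ≥ 0

namespace StronglyMonotoneWith

variable {γ : ℝ} {A F : H → H}

theorem symm (h : StronglyMonotoneWith γ A F) : StronglyMonotoneWith γ F A :=
  fun x y => (h x y).trans_eq (real_inner_comm _ _)

theorem antilipschitzWith {K : ℝ≥0} (hγ : 0 < γ) (hA : LipschitzWith K A)
    (h : StronglyMonotoneWith γ A F) : AntilipschitzWith (K / γ.toNNReal) F := by
  refine AntilipschitzWith.of_le_mul_dist fun x y => ?_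
  rw [dist_eq_norm, dist_eq_norm, NNReal.coe_div, Real.coe_toNNReal _ hγ.le, div_mul_eq_mul_div,
    le_div_iff₀ hγ]
  have hAxy : ‖A x - A y‖ ≤ K * ‖x - y‖ := by simpa only [dist_eq_norm] using hA.dist_le_mul x y
  have : γ * ‖x - y‖ ^ 2 ≤ K * ‖x - y‖ * ‖F x - F y‖ :=
    calc γ * ‖x - y‖ ^ 2 ≤ ⟪A x - A y, F x - F y⟫ := h x y
      _ ≤ ‖A x - A y‖ * ‖F x - F y‖ := real_inner_le_norm _ _
      _ ≤ K * ‖x - y‖ * ‖F x - F y‖ := by gcongr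
  rcases (norm_nonneg (x - y)).eq_or_lt with hxy | hxy
  · rw [← hxy, zero_mul]; positivity
  · nlinarith

theorem comp_rightInverse {K : ℝ≥0} {g : H → H} (hγ : 0 ≤ γ) (h : StronglyMonotoneWith γ A F)
    (hF : LipschitzWith K F) (hg : Function.RightInverse g F) :
    StronglyMonotoneWith (γ / K ^ 2) (A ∘ g) id := by
  intro u v
  have hle : ‖u - v‖ ≤ K * ‖g u - g v‖ := by
    simpa only [dist_eq_norm] using (hF.to_rightInverse hg).le_mul_dist u v
  have key := h (g u) (g v)
  simp only [hg u, hg v] at key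
  rcases eq_or_ne (K : ℝ) 0 with hK | hK
  · simpa [hK] using (mul_nonneg hγ (sq_nonneg _)).trans key
  calc γ / K ^ 2 * ‖u - v‖ ^ 2 ≤ γ / K ^ 2 * (K * ‖g u - g v‖) ^ 2 := by gcongr
    _ = γ * ‖g u - g v‖ ^ 2 := by field_simp
    _ ≤ _ := key

end StronglyMonotoneWith

theorem contractingWith_sub_smul_of_stronglyMonotone {T : H → H} {K : ℝ≥0} {μ : ℝ}
    (hK : 0 < K) (hμ : 0 < μ) (hT : LipschitzWith K T) (hm : StronglyMonotoneWith μ T id) :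
    ContractingWith (√(1 - (μ / K) ^ 2)).toNNReal fun x => x - (μ / K ^ 2) • T x := by
  refine ⟨?_, LipschitzWith.of_dist_le_mul fun x y => ?_⟩
  · rw [Real.toNNReal_lt_one, Real.sqrt_lt' one_pos]
    have : 0 < μ / K := by positivity
    nlinarith
  rw [dist_eq_norm, dist_eq_norm, Real.coe_toNNReal _ (Real.sqrt_nonneg _)]
  set t : ℝ := μ / K ^ 2
  have hK' : (0 : ℝ) < K := hK
  have hTxy : ‖T x - T y‖ ≤ K * ‖x - y‖ := by simpa only [dist_eq_norm] using hT.dist_le_mul x y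
  have hsq : ‖(x - t • T x) - (y - t • T y)‖ ^ 2 ≤ (1 - (μ / K) ^ 2) * ‖x - y‖ ^ 2 :=
    calc ‖(x - t • T x) - (y - t • T y)‖ ^ 2
        = ‖x - y‖ ^ 2 - 2 * t * ⟪T x - T y, x - y⟫ + t ^ 2 * ‖T x - T y‖ ^ 2 := by
          rw [show (x - t • T x) - (y - t • T y) = (x - y) - t • (T x - T y) by
            rw [smul_sub]; abel, norm_sub_sq_real, real_inner_smul_right, norm_smul,
            real_inner_comm, Real.norm_eq_abs, abs_of_nonneg (by positivity)]
          ring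
      _ ≤ ‖x - y‖ ^ 2 - 2 * t * (μ * ‖x - y‖ ^ 2) + t ^ 2 * (K * ‖x - y‖) ^ 2 := by
          have ht : 0 ≤ t := by positivity
          gcongr
          exact hm x y
      _ = (1 - (μ / K) ^ 2) * ‖x - y‖ ^ 2 := by simp only [t]; field_simp; ring
  calc ‖(x - t • T x) - (y - t • T y)‖ = √(‖(x - t • T x) - (y - t • T y)‖ ^ 2) :=
        (Real.sqrt_sq (norm_nonneg _)).symm
    _ ≤ √((1 - (μ / K) ^ 2) * ‖x - y‖ ^ 2) := Real.sqrt_le_sqrt hsq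
    _ = √(1 - (μ / K) ^ 2) * ‖x - y‖ := by
        rw [Real.sqrt_mul' _ (sq_nonneg _), Real.sqrt_sq (norm_nonneg _)]

theorem lipschitzWith_one_of_inner_le_zero {P : H → H} (hPC : ∀ u, P u ∈ C)
    (hP : ∀ u, ∀ y ∈ C, ⟪u - P u, y - P u⟫ ≤ 0) : LipschitzWith 1 P := by
  refine LipschitzWith.of_dist_le_mul fun u v => ?_
  rw [dist_eq_norm, dist_eq_norm, NNReal.coe_one, one_mul]
  have hsum : ⟪u - P u, P v - P u⟫ + ⟪v - P v, P u - P v⟫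
      = ‖P u - P v‖ ^ 2 - ⟪u - v, P u - P v⟫ := by
    rw [← real_inner_self_eq_norm_sq]
    simp only [inner_sub_left, inner_sub_right, real_inner_comm]
    ring
  have h1 := hP u (P v) (hPC v)
  have h2 := hP v (P u) (hPC u)
  have h3 := real_inner_le_norm (u - v) (P u - P v)
  nlinarith [norm_nonneg (P u - P v), norm_nonneg (u - v)]

theorem StronglyMonotoneWith.eq_of_solvesGVI_id {T : H → H} {μ : ℝ} {v w : H} (hμ : 0 < μ)
    (hm : StronglyMonotoneWith μ T id) (hv : SolvesGVI T id C v) (hw : SolvesGVI T id C w) :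
    v = w := by
  have h1 := hv.2 w hw.1
  have h2 := hw.2 v hv.1
  have h3 := hm v w
  have : ⟪T v - T w, v - w⟫ = -⟪T v, w - v⟫ - ⟪T w, v - w⟫ := by
    rw [inner_sub_left, ← neg_sub v w, inner_neg_right]; ring
  have : ‖v - w‖ ^ 2 ≤ 0 := by simp only [id] at h1 h2 h3; nlinarith
  simpa [sub_eq_zero] using this

variable [CompleteSpace H]

theorem exists_inner_le_zero_of_convex (hC : C.Nonempty) (hCc : IsClosed C)
    (hCconv : Convex ℝ C) (u : H) : ∃ p ∈ C, ∀ y ∈ C, ⟪u - p, y - p⟫ ≤ 0 := by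
  obtain ⟨p, hpC, hp⟩ := exists_norm_eq_iInf_of_complete_convex hC hCc.isComplete hCconv u
  exact ⟨p, hpC, (norm_eq_iInf_iff_real_inner_le_zero hCconv hpC).1 hp⟩

theorem exists_solvesGVI_id (hC : C.Nonempty) (hCc : IsClosed C) (hCconv : Convex ℝ C)
    {T : H → H} {K : ℝ≥0} {μ : ℝ} (hμ : 0 < μ) (hT : LipschitzWith K T)
    (hm : StronglyMonotoneWith μ T id) : ∃ w, SolvesGVI T id C w := by
  choose P hPC hP using exists_inner_le_zero_of_convex hC hCc hCconv
  -- the step size `μ / L ^ 2` needs a positive Lipschitz constant `L`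
  have hT' : LipschitzWith (K + 1) T := hT.weaken (le_add_of_nonneg_right zero_le_one)
  set t : ℝ := μ / ((K + 1 : ℝ≥0) : ℝ) ^ 2
  have ht : 0 < t := by positivity
  have hc := contractingWith_sub_smul_of_stronglyMonotone (by positivity) hμ hT' hm
  have hΦ : ContractingWith (1 * _) fun w => P (w - t • T w) :=
    ⟨(one_mul _).trans_lt hc.1, (lipschitzWith_one_of_inner_le_zero hPC hP).comp hc.2⟩
  obtain ⟨w, hw⟩ : ∃ w, P (w - t • T w) = w := ⟨_, hΦ.fixedPoint_isFixedPt⟩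
  refine ⟨w, hw ▸ hPC _, fun y hy => ?_⟩
  have := hP (w - t • T w) y hy
  rw [hw, sub_sub_cancel_left, inner_neg_left, real_inner_smul_left] at this
  exact nonneg_of_mul_nonneg_right (by simpa using this) ht

theorem surjective_of_stronglyMonotone {T : H → H} {K : ℝ≥0} {μ : ℝ} (hμ : 0 < μ)
    (hT : LipschitzWith K T) (hm : StronglyMonotoneWith μ T id) : Function.Surjective T := by
  intro z
  have hTz : LipschitzWith K fun x => T x - z :=
    LipschitzWith.of_dist_le_mul fun x y => by simpa only [dist_sub_right] using hT.dist_le_mul x y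
  have hmz : StronglyMonotoneWith μ (fun x => T x - z) id := by
    simpa only [StronglyMonotoneWith, sub_sub_sub_cancel_right] using hm
  obtain ⟨w, -, hw⟩ := exists_solvesGVI_id Set.univ_nonempty isClosed_univ convex_univ hμ hTz hmz
  have := hw (w - (T w - z)) trivial
  rw [id, sub_sub_cancel_left, inner_neg_right, real_inner_self_eq_norm_sq] at this
  exact ⟨w, sub_eq_zero.1 (by simpa using this)⟩

theorem StronglyMonotoneWith.surjective {A F : H → H} {KA KF : ℝ≥0} {lam γ : ℝ}
    (hAF : StronglyMonotoneWith γ A F) (hA : StronglyMonotoneWith lam A id) (hγ : 0 < γ)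
    (hlam : 0 < lam) (hKA : 0 < KA) (hALip : LipschitzWith KA A) (hFLip : LipschitzWith KF F) :
    Function.Surjective F := by
  obtain ⟨Ainv, hAinv⟩ := (surjective_of_stronglyMonotone hlam hALip hA).hasRightInverse
  have hAinvLip := (hA.symm.antilipschitzWith hlam LipschitzWith.id).to_rightInverse hAinv
  exact .of_comp (g := Ainv) <| surjective_of_stronglyMonotone (by positivity)
    (hFLip.comp hAinvLip) (hAF.symm.comp_rightInverse hγ.le hALip hAinv)

end

theorem stmt_5 {H : Type*} [NormedAddCommGroup H] [InnerProductSpace ℝ H]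
    [CompleteSpace H]
    (C : Set H) (hC : C.Nonempty) (hCc : IsClosed C) (hCconv : Convex ℝ C)
    (A F : H → H) (LA LF lam γ : ℝ) (hLA : 0 < LA) (hLF : 0 < LF)
    (hlam : 0 < lam) (hγ : 0 < γ)
    (hALip : LipschitzWith (Real.toNNReal LA) A)
    (hFLip : LipschitzWith (Real.toNNReal LF) F)
    (hAsm : ∀ x y : H, ⟪A x - A y, x - y⟫ ≥ lam * ‖x - y‖ ^ 2)
    (hmono : ∀ x y : H, ⟪A x - A y, F x - F y⟫ ≥ γ * ‖x - y‖ ^ 2) :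
    ∃! xs : H, F xs ∈ C ∧ ∀ y ∈ C, ⟪A xs, y - F xs⟫ ≥ 0 := by
  have hA : StronglyMonotoneWith lam A id := hAsm
  have hAF : StronglyMonotoneWith γ A F := hmono
  have hFsurj := hAF.surjective hA hγ hlam (Real.toNNReal_pos.2 hLA) hALip hFLip
  have hFanti := hAF.antilipschitzWith hγ hALip
  let e := Equiv.ofBijective F ⟨hFanti.injective, hFsurj⟩
  have hFe : Function.RightInverse e.symm F := e.apply_symm_apply
  have hG : StronglyMonotoneWith (γ / LF.toNNReal ^ 2) (A ∘ e.symm) id :=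
    hAF.comp_rightInverse hγ.le hFLip hFe
  have hμ : 0 < γ / LF.toNNReal ^ 2 := by
    have := Real.toNNReal_pos.2 hLF
    positivity
  obtain ⟨w, hw⟩ := exists_solvesGVI_id hC hCc hCconv hμ
    (hALip.comp (hFanti.to_rightInverse hFe)) hG
  have hsol : ∀ u, SolvesGVI A F C (e.symm u) ↔ SolvesGVI (A ∘ e.symm) id C u := fun u => by
    simp only [SolvesGVI, Function.comp_apply, id, hFe u]
  exact (e.symm.existsUnique_congr_right.symm.trans (existsUnique_congr hsol)).2
    ⟨w, hw, fun v hv => hG.eq_of_solvesGVI_id hμ hv hw⟩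
end

section
/- If A : H → H is λ-strongly monotone and L_A-Lipschitz, F : H → H is L_F-Lipschitz, and (A,F) is γ-strongly monotone, then the composition F∘A⁻¹ is (γ/L_A²)-strongly monotone and (L_F/λ)-Lipschitz continuous. -/
open scoped RealInnerProductSpace

theorem stmt_7 {H : Type*} [NormedAddCommGroup H] [InnerProductSpace ℝ H]
    [CompleteSpace H]
    (A F : H → H) (LA LF lam γ : ℝ) (hLA : 0 < LA) (hLF : 0 < LF)
    (hlam : 0 < lam) (hγ : 0 < γ)
    (hALip : LipschitzWith (Real.toNNReal LA) A)
    (hFLip : LipschitzWith (Real.toNNReal LF) F)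
    (hAsm : ∀ x y : H, ⟪A x - A y, x - y⟫ ≥ lam * ‖x - y‖ ^ 2)
    (hmono : ∀ x y : H, ⟪A x - A y, F x - F y⟫ ≥ γ * ‖x - y‖ ^ 2) :
    (∀ u v : H, ⟪(F ∘ Function.invFun A) u - (F ∘ Function.invFun A) v, u - v⟫ ≥
      (γ / LA ^ 2) * ‖u - v‖ ^ 2) ∧
    (∀ u v : H, ‖(F ∘ Function.invFun A) u - (F ∘ Function.invFun A) v‖ ≤
      (LF / lam) * ‖u - v‖) := by
  have hLA2 : (0:ℝ) < LA ^ 2 := by positivity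
  set t : ℝ := lam / LA ^ 2 with ht
  have htpos : 0 < t := by positivity
  have hAnorm : ∀ x y : H, ‖A x - A y‖ ≤ LA * ‖x - y‖ := by
    intro x y
    have := hALip.dist_le_mul x y
    simpa [dist_eq_norm, Real.coe_toNNReal LA hLA.le] using this
  have hAnorm2 : ∀ x y : H, ‖A x - A y‖ ^ 2 ≤ LA ^ 2 * ‖x - y‖ ^ 2 := by
    intro x y
    have h := hAnorm x y
    nlinarith [norm_nonneg (A x - A y), norm_nonneg (x - y)]
  have key : ∀ x y : H,
      ‖x - y - t • (A x - A y)‖ ^ 2 ≤ (1 - lam ^ 2 / LA ^ 2) * ‖x - y‖ ^ 2 := by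
    intro x y
    have h1 := hAsm x y
    have h2 := hAnorm2 x y
    have e : ‖x - y - t • (A x - A y)‖ ^ 2
        = ‖x - y‖ ^ 2 - 2 * (t * ⟪A x - A y, x - y⟫) + t ^ 2 * ‖A x - A y‖ ^ 2 := by
      rw [norm_sub_sq_real, real_inner_smul_right, real_inner_comm, norm_smul]
      rw [mul_pow, Real.norm_eq_abs, sq_abs]
    rw [e]
    have a1 : 2 * (t * ⟪A x - A y, x - y⟫) ≥ 2 * (t * (lam * ‖x - y‖ ^ 2)) := by
      nlinarith
    have a2 : t ^ 2 * ‖A x - A y‖ ^ 2 ≤ t ^ 2 * (LA ^ 2 * ‖x - y‖ ^ 2) := by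
      nlinarith
    have ht1 : t * lam = lam ^ 2 / LA ^ 2 := by rw [ht]; field_simp
    have ht2 : t ^ 2 * LA ^ 2 = lam ^ 2 / LA ^ 2 := by rw [ht]; field_simp
    nlinarith [sq_nonneg ‖x - y‖]
  have hsurj : Function.Surjective A := by
    intro b
    set T : H → H := fun x => x - t • (A x - b) with hT
    have hTsub : ∀ x y : H, T x - T y = x - y - t • (A x - A y) := by
      intro x y
      simp only [hT, smul_sub]
      abel
    set c : ℝ := max (1 - lam ^ 2 / LA ^ 2) 0 with hc
    have hc0 : 0 ≤ c := le_max_right _ _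
    have hc1 : c < 1 := by
      apply max_lt _ one_pos
      have : 0 < lam ^ 2 / LA ^ 2 := by positivity
      linarith
    set K : NNReal := Real.toNNReal (Real.sqrt c) with hK
    have hK1 : K < 1 := by
      rw [hK]
      have : Real.sqrt c < 1 := by
        rw [show (1:ℝ) = Real.sqrt 1 by simp]
        exact Real.sqrt_lt_sqrt hc0 hc1
      exact_mod_cast Real.toNNReal_lt_one.mpr this
    have hTLip : LipschitzWith K T := by
      apply LipschitzWith.of_dist_le_mul
      intro x y
      rw [dist_eq_norm, dist_eq_norm, hTsub]
      have h1 : ‖x - y - t • (A x - A y)‖ ^ 2 ≤ c * ‖x - y‖ ^ 2 := by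
        refine le_trans (key x y) ?_
        exact mul_le_mul_of_nonneg_right (le_max_left _ _) (by positivity)
      have h2 : ‖x - y - t • (A x - A y)‖ ≤ Real.sqrt c * ‖x - y‖ := by
        have := Real.sqrt_le_sqrt h1
        rwa [Real.sqrt_sq (norm_nonneg _), Real.sqrt_mul hc0,
          Real.sqrt_sq (norm_nonneg _)] at this
      calc ‖x - y - t • (A x - A y)‖ ≤ Real.sqrt c * ‖x - y‖ := h2
        _ = (K : ℝ) * ‖x - y‖ := by
            rw [hK, Real.coe_toNNReal _ (Real.sqrt_nonneg c)]
    have : Nonempty H := ⟨0⟩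
    have hcon : ContractingWith K T := ⟨hK1, hTLip⟩
    have hfix := hcon.fixedPoint_isFixedPt
    refine ⟨ContractingWith.fixedPoint T hcon, ?_⟩
    have h0 : T (ContractingWith.fixedPoint T hcon) = ContractingWith.fixedPoint T hcon :=
      hfix
    set x := ContractingWith.fixedPoint T hcon
    have : t • (A x - b) = 0 := by
      have : x - t • (A x - b) = x := h0
      linear_combination (norm := abel_nf) -this
    have h2 : A x - b = 0 := by
      rcases smul_eq_zero.mp this with h | h
      · exact absurd h (ne_of_gt htpos)
      · exact h
    exact sub_eq_zero.mp h2
  have hAinv : ∀ u : H, A (Function.invFun A u) = u := fun u => Function.invFun_eq (hsurj u)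
  constructor
  · intro u v
    set x := Function.invFun A u with hx
    set y := Function.invFun A v with hy
    have hxu : A x = u := hAinv u
    have hyv : A y = v := hAinv v
    have h1 := hmono x y
    have h2 := hAnorm2 x y
    have h3 : γ / LA ^ 2 * ‖A x - A y‖ ^ 2 ≤ γ / LA ^ 2 * (LA ^ 2 * ‖x - y‖ ^ 2) :=
      mul_le_mul_of_nonneg_left h2 (by positivity)
    have h4 : γ / LA ^ 2 * (LA ^ 2 * ‖x - y‖ ^ 2) = γ * ‖x - y‖ ^ 2 := by
      field_simp
    have h5 : ⟪F x - F y, A x - A y⟫ ≥ γ / LA ^ 2 * ‖A x - A y‖ ^ 2 := by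
      rw [real_inner_comm]; linarith
    rw [hxu, hyv] at h5
    simpa [Function.comp, ← hx, ← hy] using h5
  · intro u v
    set x := Function.invFun A u with hx
    set y := Function.invFun A v with hy
    have hxu : A x = u := hAinv u
    have hyv : A y = v := hAinv v
    have hF : ‖F x - F y‖ ≤ LF * ‖x - y‖ := by
      have := hFLip.dist_le_mul x y
      simpa [dist_eq_norm, Real.coe_toNNReal LF hLF.le] using this
    have h1 := hAsm x y
    have h2 : ⟪A x - A y, x - y⟫ ≤ ‖A x - A y‖ * ‖x - y‖ := real_inner_le_norm _ _
    have h3 : lam * ‖x - y‖ ≤ ‖A x - A y‖ := by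
      rcases eq_or_lt_of_le (norm_nonneg (x - y)) with h | h
      · rw [← h]; simp [norm_nonneg]
      · nlinarith
    have h4 : ‖F x - F y‖ ≤ LF / lam * ‖A x - A y‖ := by
      rw [div_mul_eq_mul_div, le_div_iff₀ hlam]
      nlinarith
    rw [hxu, hyv] at h4
    simpa [Function.comp, ← hx, ← hy] using h4
end

section
/- Under Assumption A (A λ-strongly monotone and L_A-Lipschitz, F L_F-Lipschitz, (A,F) monotone, Sol(A,F,C) nonempty), for each α > 0 let x_α denote the unique solution of GVI(A, F+αI, C). Then for any x* ∈ Sol(A,F,C): ⟨x*, Ax* − Ax_α⟩ ≥ λ‖x* − x_α‖², and consequently ‖x* − x_α‖ ≤ (L_A/λ)‖x*‖, so the net {x_α} is bounded on (0,∞). -/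
open scoped RealInnerProductSpace

theorem stmt_11 {H : Type*} [NormedAddCommGroup H] [InnerProductSpace ℝ H]
    (C : Set H) (hC : C.Nonempty) (hCc : IsClosed C) (hCconv : Convex ℝ C)
    (A F : H → H) (LA LF lam : ℝ) (hLA : 0 < LA) (hLF : 0 < LF) (hlam : 0 < lam)
    (hALip : LipschitzWith (Real.toNNReal LA) A)
    (hFLip : LipschitzWith (Real.toNNReal LF) F)
    (hAsm : ∀ x y : H, ⟪A x - A y, x - y⟫ ≥ lam * ‖x - y‖ ^ 2)
    (hmono : ∀ x y : H, ⟪A x - A y, F x - F y⟫ ≥ 0)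
    (x_ : ℝ → H)
    (hreg : ∀ α : ℝ, 0 < α →
      (F (x_ α) + α • x_ α ∈ C ∧ ∀ y ∈ C, ⟪A (x_ α), y - (F (x_ α) + α • x_ α)⟫ ≥ 0))
    (xs : H) (hxs : F xs ∈ C ∧ ∀ y ∈ C, ⟪A xs, y - F xs⟫ ≥ 0) :
    ∀ α : ℝ, 0 < α →
      ⟪xs, A xs - A (x_ α)⟫ ≥ lam * ‖xs - x_ α‖ ^ 2 ∧
      ‖xs - x_ α‖ ≤ (LA / lam) * ‖xs‖ := by

  intro a ha
  obtain ⟨hmem, hineq⟩ := hreg a ha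
  obtain ⟨hmem', hineq'⟩ := hxs
  set xa := x_ a with hxa
  have h1 := hineq' _ hmem
  have h2 := hineq _ hmem'
  have hm := hmono xs xa
  have hsum : 0 ≤ -⟪A xs - A xa, F xs - F xa⟫ + a * ⟪A xs - A xa, xa⟫ := by
    have hs := add_nonneg (le_of_lt (lt_of_lt_of_le (by linarith : (0:ℝ) < 1) le_rfl) |> fun _ => h1) h2
    have e : ⟪A xs, F xa + a • xa - F xs⟫ + ⟪A xa, F xs - (F xa + a • xa)⟫
        = -⟪A xs - A xa, F xs - F xa⟫ + a * ⟪A xs - A xa, xa⟫ := by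
      simp [inner_sub_left, inner_sub_right, inner_add_right, inner_smul_right]
      ring
    have hs' : (0:ℝ) ≤ ⟪A xs, F xa + a • xa - F xs⟫ + ⟪A xa, F xs - (F xa + a • xa)⟫ :=
      add_nonneg h1 h2
    linarith [e ▸ hs']
  have key : 0 ≤ ⟪A xs - A xa, xa⟫ := by nlinarith [hm, hsum, ha]
  have hAsm' := hAsm xs xa
  have expand : ⟪A xs - A xa, xs - xa⟫ = ⟪xs, A xs - A xa⟫ - ⟪A xs - A xa, xa⟫ := by
    rw [inner_sub_right, real_inner_comm (A xs - A xa) xs]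
  have hfirst : ⟪xs, A xs - A xa⟫ ≥ lam * ‖xs - xa‖ ^ 2 := by linarith
  refine ⟨hfirst, ?_⟩
  have hcs : ⟪xs, A xs - A xa⟫ ≤ ‖xs‖ * ‖A xs - A xa‖ := real_inner_le_norm _ _
  have hlip : ‖A xs - A xa‖ ≤ LA * ‖xs - xa‖ := by
    have := hALip.dist_le_mul xs xa
    simpa [dist_eq_norm, Real.coe_toNNReal LA hLA.le] using this
  rw [div_mul_eq_mul_div, le_div_iff₀ hlam]
  rcases eq_or_lt_of_le (norm_nonneg (xs - xa)) with h0 | h0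
  · rw [← h0, zero_mul]; positivity
  · nlinarith [norm_nonneg xs]
end

section
/- Under the same assumptions, for any α, β > 0 the regularized solutions satisfy (β−α)⟨x_α, Ax_α − Ax_β⟩ ≥ βλ‖x_α − x_β‖², and hence ‖x_α − x_β‖ ≤ (M/β)|β−α| where M = L_A·K/λ and K = sup_{α>0}‖x_α‖. -/
open scoped RealInnerProductSpace

theorem stmt_12 {H : Type*} [NormedAddCommGroup H] [InnerProductSpace ℝ H]
    (C : Set H) (hC : C.Nonempty) (hCc : IsClosed C) (hCconv : Convex ℝ C)
    (A F : H → H) (LA LF lam : ℝ) (hLA : 0 < LA) (hLF : 0 < LF) (hlam : 0 < lam)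
    (hALip : LipschitzWith (Real.toNNReal LA) A)
    (hFLip : LipschitzWith (Real.toNNReal LF) F)
    (hAsm : ∀ x y : H, ⟪A x - A y, x - y⟫ ≥ lam * ‖x - y‖ ^ 2)
    (hmono : ∀ x y : H, ⟪A x - A y, F x - F y⟫ ≥ 0)
    (x_ : ℝ → H)
    (hreg : ∀ α : ℝ, 0 < α →
      (F (x_ α) + α • x_ α ∈ C ∧ ∀ y ∈ C, ⟪A (x_ α), y - (F (x_ α) + α • x_ α)⟫ ≥ 0))
    (K : ℝ) (hK : ∀ α : ℝ, 0 < α → ‖x_ α‖ ≤ K) :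
    ∀ α β : ℝ, 0 < α → 0 < β →
      (β - α) * ⟪x_ α, A (x_ α) - A (x_ β)⟫ ≥ β * lam * ‖x_ α - x_ β‖ ^ 2 ∧
      ‖x_ α - x_ β‖ ≤ (LA * K / lam / β) * |β - α| := by
  intro α β hα hβ
  set a := x_ α with ha
  set b := x_ β with hb
  obtain ⟨haC, hva⟩ := hreg α hα
  obtain ⟨hbC, hvb⟩ := hreg β hβ
  have h1 := hva _ hbC
  have h2 := hvb _ haC
  have hsum : (0:ℝ) ≤ ⟪A a - A b, (F b + β • b) - (F a + α • a)⟫ := by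
    rw [inner_sub_left]
    have hneg : (F b + β • b) - (F a + α • a) = -((F a + α • a) - (F b + β • b)) := by abel
    have h2' : ⟪A b, (F b + β • b) - (F a + α • a)⟫ ≤ 0 := by
      rw [hneg, inner_neg_right]; linarith
    linarith
  have hd : (F b + β • b) - (F a + α • a)
      = (F b - F a) + ((β - α) • a - β • (a - b)) := by
    module
  rw [hd, inner_add_right, inner_sub_right, inner_sub_right, real_inner_smul_right,
    real_inner_smul_right] at hsum
  have hmon : ⟪A a - A b, F b - F a⟫ ≤ 0 := by
    have hne : F b - F a = -(F a - F b) := by abel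
    rw [hne, inner_neg_right]
    have := hmono a b
    linarith
  rw [inner_sub_right] at hmon
  have key : (β - α) * ⟪A a - A b, a⟫ ≥ β * ⟪A a - A b, a - b⟫ := by linarith
  have hsm := hAsm a b
  have hcomm : ⟪a, A a - A b⟫ = ⟪A a - A b, a⟫ := real_inner_comm _ _
  have goal1 : (β - α) * ⟪a, A a - A b⟫ ≥ β * lam * ‖a - b‖ ^ 2 := by
    rw [hcomm]
    nlinarith [mul_le_mul_of_nonneg_left hsm hβ.le]
  refine ⟨goal1, ?_⟩
  have hKnn : 0 ≤ K := le_trans (norm_nonneg (x_ 1)) (hK 1 one_pos)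
  have hCS : |⟪a, A a - A b⟫| ≤ ‖a‖ * ‖A a - A b‖ := abs_real_inner_le_norm _ _
  have hLip : ‖A a - A b‖ ≤ LA * ‖a - b‖ := by
    have := hALip.dist_le_mul a b
    rwa [dist_eq_norm, dist_eq_norm, Real.coe_toNNReal LA hLA.le] at this
  have hna : ‖a‖ ≤ K := hK α hα
  have chain : β * lam * ‖a - b‖ ^ 2 ≤ |β - α| * (K * (LA * ‖a - b‖)) := by
    have h1 : (β - α) * ⟪a, A a - A b⟫ ≤ |β - α| * |⟪a, A a - A b⟫| := by
      rw [← abs_mul]; exact le_abs_self _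
    have h2 : |β - α| * |⟪a, A a - A b⟫| ≤ |β - α| * (‖a‖ * ‖A a - A b‖) :=
      mul_le_mul_of_nonneg_left hCS (abs_nonneg _)
    have h3 : ‖a‖ * ‖A a - A b‖ ≤ K * (LA * ‖a - b‖) := by
      apply mul_le_mul hna hLip (norm_nonneg _) hKnn
    nlinarith [abs_nonneg (β - α)]
  rcases eq_or_lt_of_le (norm_nonneg (a - b)) with h0 | h0
  · rw [← h0]
    positivity
  · have heq : LA * K / lam / β * |β - α| = LA * K * |β - α| / (lam * β) := by
      field_simp
    rw [heq, le_div_iff₀ (by positivity : (0:ℝ) < lam * β)]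
    nlinarith
end

section
/- Let x(t) solve ẋ = P(Fx − μAx) − Fx with (A,F) γ-strongly monotone, F L_F-Lipschitz, A linear self-adjoint, and x† the unique solution of GVI(A,F,C). Then with y(t) := P(Fx(t) − μAx(t)), the key dissipation inequality holds: ⟨Ax(t) − Ax†, y(t) − Fx(t)⟩ ≤ −(γ − L_F²/(2μ))‖x(t) − x†‖² − (1/(2μ))‖y(t) − Fx(t)‖². -/
open scoped RealInnerProductSpace

theorem stmt_16 {H : Type*} [NormedAddCommGroup H] [InnerProductSpace ℝ H]
    [CompleteSpace H]
    (C : Set H) (hC : C.Nonempty) (hCc : IsClosed C) (hCconv : Convex ℝ C)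
    (P : H → H)
    (hP : ∀ x : H, P x ∈ C ∧ ∀ y ∈ C, ‖x - P x‖ ≤ ‖x - y‖)
    (A : H →L[ℝ] H) (F : H → H) (LF γ μ : ℝ)
    (hLF : 0 < LF) (hγ : 0 < γ) (hμ : 0 < μ)
    (hAsa : IsSelfAdjoint A)
    (hFLip : LipschitzWith (Real.toNNReal LF) F)
    (hcouple : ∀ u v : H, ⟪A u - A v, F u - F v⟫ ≥ γ * ‖u - v‖ ^ 2)
    (xd : H) (hxd : F xd ∈ C ∧ ∀ y ∈ C, ⟪A xd, y - F xd⟫ ≥ 0)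
    (x : ℝ → H)
    (hODE : ∀ t ∈ Set.Ici (0 : ℝ), HasDerivWithinAt x
      (P (F (x t) - μ • A (x t)) - F (x t)) (Set.Ici (0 : ℝ)) t)
    (y : ℝ → H) (hy : ∀ t, y t = P (F (x t) - μ • A (x t))) :
    ∀ t : ℝ, 0 ≤ t →
      ⟪A (x t) - A xd, y t - F (x t)⟫ ≤
        -(γ - LF ^ 2 / (2 * μ)) * ‖x t - xd‖ ^ 2 -
          (1 / (2 * μ)) * ‖y t - F (x t)‖ ^ 2 := by
  intro t ht
  set u : H := F (x t) - μ • A (x t) with hu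
  haveI : Nonempty C := hC.to_subtype
  obtain ⟨hPuC, hPumin⟩ := hP u
  -- projection variational inequality
  have hinf : ‖u - P u‖ = ⨅ w : C, ‖u - w‖ := by
    apply le_antisymm
    · exact le_ciInf fun w => hPumin w w.2
    · exact ciInf_le ⟨0, by rintro b ⟨w, rfl⟩; exact norm_nonneg _⟩ (⟨P u, hPuC⟩ : C)
  have hVI : ∀ w ∈ C, ⟪u - P u, w - P u⟫ ≤ 0 :=
    (norm_eq_iInf_iff_real_inner_le_zero hCconv hPuC).mp hinf
  have hyt : y t = P u := hy t
  have hyC : y t ∈ C := hyt ▸ hPuC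
  set v : H := y t - F (x t) with hv
  set d : H := F xd - F (x t) with hd
  have h1 : ⟪u - y t, F xd - y t⟫ ≤ 0 := by rw [hyt]; exact hVI (F xd) hxd.1
  have h2 : ⟪A xd, y t - F xd⟫ ≥ 0 := hxd.2 (y t) hyC
  have h3 := hcouple (x t) xd
  -- Lipschitz bound
  have h4 : ‖d‖ ≤ LF * ‖x t - xd‖ := by
    have := hFLip.dist_le_mul xd (x t)
    rw [Real.coe_toNNReal LF hLF.le] at this
    calc ‖d‖ = dist (F xd) (F (x t)) := by rw [hd, dist_eq_norm]
    _ ≤ LF * dist xd (x t) := this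
    _ = LF * ‖x t - xd‖ := by rw [dist_eq_norm, norm_sub_rev]
  -- expand h1
  have hvec1 : u - y t = -v - μ • (A (x t)) := by rw [hu, hv]; abel
  have hvec2 : F xd - y t = d - v := by rw [hv, hd]; abel
  have h1' : -⟪v, d⟫ + ‖v‖ ^ 2 - μ * ⟪(A (x t) : H), d⟫ + μ * ⟪(A (x t) : H), v⟫ ≤ 0 := by
    rw [hvec1, hvec2] at h1
    simp only [inner_sub_left, inner_sub_right, inner_neg_left, real_inner_smul_left,
      real_inner_self_eq_norm_sq] at h1
    linarith
  -- expand h2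
  have hvec3 : y t - F xd = v - d := by rw [hv, hd]; abel
  have h2' : ⟪(A xd : H), v⟫ - ⟪(A xd : H), d⟫ ≥ 0 := by
    rw [hvec3, inner_sub_right] at h2
    linarith
  -- expand h3
  have hvec4 : F (x t) - F xd = -d := by rw [hd]; abel
  have h3' : ⟪(A (x t) : H), d⟫ - ⟪(A xd : H), d⟫ ≤ -(γ * ‖x t - xd‖ ^ 2) := by
    rw [hvec4, inner_neg_right, inner_sub_left] at h3
    linarith
  -- Cauchy–Schwarz
  have h5 : ⟪v, d⟫ ≤ ‖v‖ * ‖d‖ := real_inner_le_norm v d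
  have h6 : ‖v‖ * ‖d‖ ≤ ‖v‖ * (LF * ‖x t - xd‖) :=
    mul_le_mul_of_nonneg_left h4 (norm_nonneg v)
  have hamgm : ‖v‖ * (LF * ‖x t - xd‖) ≤ (1/2) * ‖v‖ ^ 2 + (LF ^ 2 / 2) * ‖x t - xd‖ ^ 2 := by
    nlinarith [sq_nonneg (‖v‖ - LF * ‖x t - xd‖)]
  -- combine
  have key : μ * (⟪(A (x t) : H), v⟫ - ⟪(A xd : H), v⟫) ≤
      -(μ * γ - LF ^ 2 / 2) * ‖x t - xd‖ ^ 2 - (1/2) * ‖v‖ ^ 2 := by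
    nlinarith [mul_le_mul_of_nonneg_left h2' hμ.le, mul_le_mul_of_nonneg_left h3' hμ.le]
  have goal' : ⟪(A (x t) : H), v⟫ - ⟪(A xd : H), v⟫ ≤
      (-(μ * γ - LF ^ 2 / 2) * ‖x t - xd‖ ^ 2 - (1/2) * ‖v‖ ^ 2) / μ :=
    (le_div_iff₀' hμ).mpr key
  have hrhs : (-(μ * γ - LF ^ 2 / 2) * ‖x t - xd‖ ^ 2 - (1/2) * ‖v‖ ^ 2) / μ =
      -(γ - LF ^ 2 / (2 * μ)) * ‖x t - xd‖ ^ 2 - (1 / (2 * μ)) * ‖v‖ ^ 2 := by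
    rw [div_eq_iff hμ.ne']; field_simp
  rw [inner_sub_left]
  rw [hrhs] at goal'
  exact goal'
end

section
/- On a separable Hilbert space H with orthonormal basis {e_i}, let A = F be the right-shift operator Ax = ∑ x_i e_{i+1}. Then A and F are 1-Lipschitz bounded linear operators that are not surjective, yet the couple (A,F) is 1-strongly monotone. -/
open scoped RealInnerProductSpace

theorem stmt_18 {H : Type*} [NormedAddCommGroup H] [InnerProductSpace ℝ H]
    [CompleteSpace H]
    (e : HilbertBasis ℕ ℝ H)
    (A : H →L[ℝ] H) (hA : ∀ i : ℕ, A (e i) = e (i + 1)) :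
    (∀ x y : H, ‖A x - A y‖ ≤ 1 * ‖x - y‖) ∧
    ¬ Function.Surjective A ∧
    (∀ x y : H, ⟪A x - A y, A x - A y⟫ ≥ 1 * ‖x - y‖ ^ 2) := by
  have hdense : Dense ((Submodule.span ℝ (Set.range (e : ℕ → H)) : Submodule ℝ H) : Set H) := by
    rw [Submodule.dense_iff_topologicalClosure_eq_top]
    exact e.dense_span
  have hie : ∀ i j : ℕ, ⟪e i, e j⟫ = if i = j then (1 : ℝ) else 0 :=
    orthonormal_iff_ite.mp e.orthonormal
  -- coefficient lemmas
  have h0 : ∀ y : H, ⟪e 0, A y⟫ = 0 := by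
    have heq : (innerSL ℝ (e 0)).comp A = (0 : H →L[ℝ] ℝ) := by
      apply ContinuousLinearMap.ext_on hdense
      rintro _ ⟨i, rfl⟩
      simp only [ContinuousLinearMap.comp_apply, hA, innerSL_apply_apply,
        ContinuousLinearMap.zero_apply]
      rw [hie 0 (i + 1), if_neg (by omega)]
    intro y
    simpa using ContinuousLinearMap.ext_iff.mp heq y
  have hsucc : ∀ (i : ℕ) (y : H), ⟪e (i + 1), A y⟫ = ⟪e i, y⟫ := by
    intro i
    have heq : (innerSL ℝ (e (i + 1))).comp A = innerSL ℝ (e i) := by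
      apply ContinuousLinearMap.ext_on hdense
      rintro _ ⟨j, rfl⟩
      simp only [ContinuousLinearMap.comp_apply, hA, innerSL_apply_apply]
      rw [hie (i + 1) (j + 1), hie i j]
      by_cases h : i = j
      · simp [h]
      · rw [if_neg (by omega), if_neg h]
    intro y
    simpa using ContinuousLinearMap.ext_iff.mp heq y
  -- inner product preservation
  have hinner : ∀ x y : H, ⟪A x, A y⟫ = ⟪x, y⟫ := by
    intro x y
    rw [← e.tsum_inner_mul_inner (A x) (A y), ← e.tsum_inner_mul_inner x y]
    rw [Summable.tsum_eq_zero_add (e.summable_inner_mul_inner (A x) (A y))]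
    have hx0 : ⟪A x, e 0⟫ = 0 := by rw [real_inner_comm]; exact h0 x
    rw [hx0, zero_mul, zero_add]
    congr 1
    funext i
    rw [show ⟪A x, e (i + 1)⟫ = ⟪x, e i⟫ by
        rw [real_inner_comm, hsucc, real_inner_comm], hsucc]
  have hnorm : ∀ z : H, ‖A z‖ = ‖z‖ := by
    intro z
    have := hinner z z
    rw [real_inner_self_eq_norm_sq, real_inner_self_eq_norm_sq] at this
    nlinarith [norm_nonneg (A z), norm_nonneg z]
  refine ⟨?_, ?_, ?_⟩
  · intro x y
    rw [one_mul, ← map_sub, hnorm]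
  · intro hsurj
    obtain ⟨x, hx⟩ := hsurj (e 0)
    have h1 := h0 x
    rw [hx, hie 0 0, if_pos rfl] at h1
    norm_num at h1
  · intro x y
    rw [← map_sub, real_inner_self_eq_norm_sq, hnorm, one_mul]
end

section
/- Let H = ℝ³, C the closed unit ball, B the lower-triangular matrix of ones, A = BᵀB, and F x = A⁻¹ P x where P is the projection onto C. Then the couple (A,F) is monotone (indeed ⟨Ax−Ay, Fx−Fy⟩ = ⟨x−y, Px−Py⟩ ≥ ‖Px−Py‖² ≥ 0) and the solution set of GVI(A,F,C) equals {0}. -/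
/-!
The identity `⟪A x, A⁻¹ u⟫ = ⟪x, u⟫` (valid because `A` is symmetric) turns the monotonicity of
the couple `(A, F)` into the firm nonexpansiveness of the metric projection `P`.
For a solution `x` of the GVI, testing against the point `y = -A x / ‖A x‖` of the unit ball
gives `-‖A x‖ ≥ ⟪A x, F x⟫ = ⟪x, P x⟫ ≥ ‖P x‖² ≥ 0`, so `A x = 0` and hence `x = 0`.
-/

open scoped RealInnerProductSpace

noncomputable def stmt19A : EuclideanSpace ℝ (Fin 3) → EuclideanSpace ℝ (Fin 3) :=
  fun x => WithLp.toLp 2 ![x 0 + x 1 + x 2, x 0 + 2 * x 1 + 2 * x 2, x 0 + 2 * x 1 + 3 * x 2]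

noncomputable def stmt19Ainv : EuclideanSpace ℝ (Fin 3) → EuclideanSpace ℝ (Fin 3) :=
  fun x => WithLp.toLp 2 ![2 * x 0 - x 1, -x 0 + 2 * x 1 - x 2, -x 1 + x 2]

section MetricProjection

variable {E : Type*} [NormedAddCommGroup E]

def IsMetricProjection (K : Set E) (P : E → E) : Prop :=
  ∀ x, P x ∈ K ∧ ∀ y ∈ K, ‖x - P x‖ ≤ ‖x - y‖

namespace IsMetricProjection

variable {K : Set E} {P : E → E}

theorem apply_of_mem (hP : IsMetricProjection K P) {x : E} (hx : x ∈ K) : P x = x := by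
  have h := (hP x).2 x hx
  rw [sub_self, norm_zero, norm_le_zero_iff, sub_eq_zero] at h
  exact h.symm

variable [InnerProductSpace ℝ E]

theorem real_inner_le_zero (hP : IsMetricProjection K P) (hK : Convex ℝ K) (x : E) :
    ∀ w ∈ K, ⟪x - P x, w - P x⟫ ≤ 0 := by
  have : Nonempty K := ⟨⟨P x, (hP x).1⟩⟩
  refine (norm_eq_iInf_iff_real_inner_le_zero hK (hP x).1).1 <|
    le_antisymm (le_ciInf fun w => (hP x).2 w w.2) ?_
  exact ciInf_le ⟨0, by rintro _ ⟨w, rfl⟩; exact norm_nonneg _⟩ (⟨P x, (hP x).1⟩ : K)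

theorem norm_sub_sq_le_real_inner (hP : IsMetricProjection K P) (hK : Convex ℝ K) (x y : E) :
    ‖P x - P y‖ ^ 2 ≤ ⟪x - y, P x - P y⟫ := by
  have hx := hP.real_inner_le_zero hK x (P y) (hP y).1
  have hy := hP.real_inner_le_zero hK y (P x) (hP x).1
  rw [← real_inner_self_eq_norm_sq]
  simp only [inner_sub_left, inner_sub_right] at hx hy ⊢
  linarith [real_inner_comm (P x) (P y), real_inner_comm x (P y), real_inner_comm y (P x)]

end IsMetricProjection

variable [InnerProductSpace ℝ E] in
theorem exists_mem_closedBall_real_inner_eq_neg_norm (a : E) :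
    ∃ y ∈ Metric.closedBall (0 : E) 1, ⟪a, y⟫ = -‖a‖ := by
  refine ⟨-‖a‖⁻¹ • a, ?_, ?_⟩
  · rw [mem_closedBall_zero_iff, norm_smul, norm_neg, norm_inv, norm_norm]
    exact inv_mul_le_one
  · rw [real_inner_smul_right, real_inner_self_eq_norm_sq]
    rcases eq_or_ne ‖a‖ 0 with ha | ha
    · simp [ha]
    · field_simp

end MetricProjection

section Stmt19Matrices

variable (x y u : EuclideanSpace ℝ (Fin 3))

theorem stmt19A_sub : stmt19A x - stmt19A y = stmt19A (x - y) := by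
  ext i
  fin_cases i <;> simp only [stmt19A, Fin.isValue, Fin.zero_eta, Fin.mk_one, Fin.reduceFinMk, PiLp.sub_apply,
    Matrix.cons_val_zero, Matrix.cons_val_one, Matrix.cons_val] <;> ring

theorem stmt19Ainv_sub : stmt19Ainv x - stmt19Ainv y = stmt19Ainv (x - y) := by
  ext i
  fin_cases i <;> simp only [stmt19Ainv, Fin.isValue, Fin.zero_eta, Fin.mk_one, Fin.reduceFinMk, PiLp.sub_apply,
    Matrix.cons_val_zero, Matrix.cons_val_one, Matrix.cons_val] <;> ring

theorem stmt19A_zero : stmt19A 0 = 0 := by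
  ext i; fin_cases i <;> simp [stmt19A]

theorem stmt19Ainv_zero : stmt19Ainv 0 = 0 := by
  ext i; fin_cases i <;> simp [stmt19Ainv]

theorem real_inner_stmt19A_stmt19Ainv : ⟪stmt19A x, stmt19Ainv u⟫ = ⟪x, u⟫ := by
  simp only [stmt19A, stmt19Ainv, PiLp.inner_apply, RCLike.inner_apply, Real.ringHom_apply,
    Fin.sum_univ_three, Fin.isValue, Matrix.cons_val_zero, Matrix.cons_val_one, Matrix.cons_val]
  ring

theorem stmt19A_eq_zero_iff {x : EuclideanSpace ℝ (Fin 3)} : stmt19A x = 0 ↔ x = 0 := by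
  refine ⟨fun h => ?_, fun h => h ▸ stmt19A_zero⟩
  have h0 := congrArg (· 0) h
  have h1 := congrArg (· 1) h
  have h2 := congrArg (· 2) h
  simp only [stmt19A, Fin.isValue, PiLp.zero_apply, Matrix.cons_val_zero, Matrix.cons_val_one,
    Matrix.cons_val] at h0 h1 h2
  ext i
  fin_cases i <;> simp only [Fin.zero_eta, Fin.mk_one, Fin.reduceFinMk, PiLp.zero_apply] <;> linarith

end Stmt19Matrices

theorem stmt_19
    (C : Set (EuclideanSpace ℝ (Fin 3)))
    (hCdef : C = Metric.closedBall 0 1)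
    (P : EuclideanSpace ℝ (Fin 3) → EuclideanSpace ℝ (Fin 3))
    (hP : ∀ x, P x ∈ C ∧ ∀ y ∈ C, ‖x - P x‖ ≤ ‖x - y‖)
    (F : EuclideanSpace ℝ (Fin 3) → EuclideanSpace ℝ (Fin 3))
    (hF : ∀ x, F x = stmt19Ainv (P x)) :
    (∀ x y : EuclideanSpace ℝ (Fin 3),
      ⟪stmt19A x - stmt19A y, F x - F y⟫ = ⟪x - y, P x - P y⟫ ∧
      ⟪x - y, P x - P y⟫ ≥ ‖P x - P y‖ ^ 2 ∧
      (0 : ℝ) ≤ ⟪stmt19A x - stmt19A y, F x - F y⟫) ∧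
    {x : EuclideanSpace ℝ (Fin 3) |
      F x ∈ C ∧ ∀ y ∈ C, ⟪stmt19A x, y - F x⟫ ≥ 0} = {0} := by
  subst hCdef
  have hfirm := IsMetricProjection.norm_sub_sq_le_real_inner hP (convex_closedBall 0 1)
  have hP0 : P 0 = 0 := IsMetricProjection.apply_of_mem hP (Metric.mem_closedBall_self zero_le_one)
  have hcouple (x y) : ⟪stmt19A x - stmt19A y, F x - F y⟫ = ⟪x - y, P x - P y⟫ := by
    rw [hF, hF, stmt19A_sub, stmt19Ainv_sub, real_inner_stmt19A_stmt19Ainv]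
  have hpos (x) : 0 ≤ ⟪stmt19A x, F x⟫ := by
    rw [hF, real_inner_stmt19A_stmt19Ainv]
    simpa [hP0] using (sq_nonneg _).trans (hfirm x 0)
  refine ⟨fun x y => ⟨hcouple x y, hfirm x y, hcouple x y ▸ (sq_nonneg _).trans (hfirm x y)⟩, ?_⟩
  ext x
  constructor
  · rintro ⟨-, hVI⟩
    obtain ⟨y, hy, hAy⟩ := exists_mem_closedBall_real_inner_eq_neg_norm (stmt19A x)
    have hxy := hVI y hy
    rw [inner_sub_right, hAy] at hxy
    exact stmt19A_eq_zero_iff.1 (norm_le_zero_iff.1 (by linarith [hpos x]))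
  · rintro rfl
    simp [hF, hP0, stmt19Ainv_zero, stmt19A_zero]
end
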